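/- The critical points of the moment map restricted to 𝒲_n are exactly the fixed points of the lifted rotation action: for every n ∈ ℕ and every z = (z₁,z₂,z₃) ∈ ℂ³ with z₁² + z₂² + z₃^{n+1} = 1, one has (for every w ∈ ℂ³ with (D f_n(z))(w) = 0, also (D h̃(z))(w) = 0) if and only if z₁ = 0 and z₂ = 0. Here f_n(z₁,z₂,z₃) = z₁² + z₂² + z₃^{n+1}, h̃(z₁,z₂,z₃) = Im(z₁ · conj z₂), and D denotes the ℝ-Fréchet derivative. -/

import Mathlib

/-- The defining polynomial `f_n(z₁,z₂,z₃) = z₁² + z₂² + z₃^{n+1}` of the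
`A_n` Stein surface `𝒲_n = f_n⁻¹(1)`. -/
def steinPoly (n : ℕ) (z : ℂ × ℂ × ℂ) : ℂ :=
  z.1 ^ 2 + z.2.1 ^ 2 + z.2.2 ^ (n + 1)

/-- The moment map `h̃(z₁,z₂,z₃) = Im(z₁ ⬝ conj z₂)` of the lifted rotation
action on `ℂ³`. -/
noncomputable def liftMomentMap (z : ℂ × ℂ × ℂ) : ℝ :=
  (z.1 * (starRingEnd ℂ) z.2.1).im

/-- Evaluation of the real Fréchet derivative of `steinPoly`. -/
lemma fderiv_steinPoly_apply (n : ℕ) (z w : ℂ × ℂ × ℂ) :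
    fderiv ℝ (steinPoly n) z w
      = 2 * z.1 * w.1 + 2 * z.2.1 * w.2.1 + ((n : ℂ) + 1) * z.2.2 ^ n * w.2.2 := by
  have h1 : HasFDerivAt (fun z : ℂ × ℂ × ℂ => z.1 ^ 2)
      ((2 * z.1 ^ 1) • ContinuousLinearMap.fst ℂ ℂ (ℂ × ℂ)) z :=
    (hasDerivAt_pow 2 z.1).comp_hasFDerivAt z (hasFDerivAt_fst)
  have h2 : HasFDerivAt (fun z : ℂ × ℂ × ℂ => z.2.1 ^ 2)
      ((2 * z.2.1 ^ 1) • ((ContinuousLinearMap.fst ℂ ℂ ℂ).comp (ContinuousLinearMap.snd ℂ ℂ (ℂ × ℂ)))) z := by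
    have := (hasDerivAt_pow 2 z.2.1).comp_hasFDerivAt (𝕜 := ℂ) z
      ((hasFDerivAt_fst (𝕜 := ℂ)).comp z (hasFDerivAt_snd (𝕜 := ℂ) (p := z)))
    simpa [Function.comp_def] using this
  have h3 : HasFDerivAt (fun z : ℂ × ℂ × ℂ => z.2.2 ^ (n + 1))
      ((((n : ℕ) + 1 : ℂ) * z.2.2 ^ n) • ((ContinuousLinearMap.snd ℂ ℂ ℂ).comp (ContinuousLinearMap.snd ℂ ℂ (ℂ × ℂ)))) z := by
    have := (hasDerivAt_pow (n + 1) z.2.2).comp_hasFDerivAt (𝕜 := ℂ) z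
      ((hasFDerivAt_snd (𝕜 := ℂ)).comp z (hasFDerivAt_snd (𝕜 := ℂ) (p := z)))
    simpa [Function.comp_def] using this
  have H := ((h1.add h2).add h3).restrictScalars ℝ
  rw [show steinPoly n = ((fun z : ℂ × ℂ × ℂ => z.1 ^ 2) + (fun z : ℂ × ℂ × ℂ => z.2.1 ^ 2)) +
    (fun z : ℂ × ℂ × ℂ => z.2.2 ^ (n + 1)) from rfl]
  rw [H.fderiv]
  simp only [ContinuousLinearMap.coe_restrictScalars', ContinuousLinearMap.add_apply,
    ContinuousLinearMap.smul_apply, ContinuousLinearMap.coe_comp', Function.comp_apply,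
    ContinuousLinearMap.coe_fst', ContinuousLinearMap.coe_snd', smul_eq_mul, pow_one]

/-- Evaluation of the real Fréchet derivative of `liftMomentMap`. -/
lemma fderiv_liftMomentMap_apply (z w : ℂ × ℂ × ℂ) :
    fderiv ℝ liftMomentMap z w
      = (w.1 * (starRingEnd ℂ) z.2.1 + z.1 * (starRingEnd ℂ) w.2.1).im := by
  have hc : HasFDerivAt (fun z : ℂ × ℂ × ℂ => (starRingEnd ℂ) z.2.1)
      ((Complex.conjCLE.toContinuousLinearMap).comp
        ((ContinuousLinearMap.fst ℝ ℂ ℂ).comp (ContinuousLinearMap.snd ℝ ℂ (ℂ × ℂ)))) z :=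
    (((Complex.conjCLE.toContinuousLinearMap).comp
        ((ContinuousLinearMap.fst ℝ ℂ ℂ).comp (ContinuousLinearMap.snd ℝ ℂ (ℂ × ℂ)))).hasFDerivAt)
  have h1 : HasFDerivAt (fun z : ℂ × ℂ × ℂ => z.1) (ContinuousLinearMap.fst ℝ ℂ (ℂ × ℂ)) z :=
    hasFDerivAt_fst
  have hmul := h1.mul hc
  have H : HasFDerivAt liftMomentMap
      (Complex.imCLM.comp
        (z.1 • (Complex.conjCLE.toContinuousLinearMap).comp
            ((ContinuousLinearMap.fst ℝ ℂ ℂ).comp (ContinuousLinearMap.snd ℝ ℂ (ℂ × ℂ))) +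
          (starRingEnd ℂ) z.2.1 • ContinuousLinearMap.fst ℝ ℂ (ℂ × ℂ))) z :=
    Complex.imCLM.hasFDerivAt.comp z hmul
  rw [H.fderiv]
  simp [Complex.add_im, Complex.mul_im]
  ring

/-- The critical points of the moment map restricted to `𝒲_n` (i.e. points
where `D h̃` vanishes on the kernel of `D f_n`) are exactly the fixed points
of the lifted rotation action, namely the points with `z₁ = z₂ = 0`. -/
theorem stmt17 (n : ℕ) (z : ℂ × ℂ × ℂ) (hz : steinPoly n z = 1) :
    (∀ w : ℂ × ℂ × ℂ, (fderiv ℝ (steinPoly n) z) w = 0 →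
        (fderiv ℝ liftMomentMap z) w = 0)
      ↔ (z.1 = 0 ∧ z.2.1 = 0) := by
  constructor
  · intro h
    set w : ℂ × ℂ × ℂ := (Complex.I * z.2.1, -(Complex.I * z.1), 0) with hw
    have hker : (fderiv ℝ (steinPoly n) z) w = 0 := by
      rw [fderiv_steinPoly_apply]
      simp [hw]; ring
    have := h w hker
    rw [fderiv_liftMomentMap_apply] at this
    have hval : (w.1 * (starRingEnd ℂ) z.2.1 + z.1 * (starRingEnd ℂ) w.2.1).im
        = Complex.normSq z.2.1 + Complex.normSq z.1 := by
      simp [hw, Complex.normSq_apply, Complex.mul_im, Complex.mul_re]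
      ring
    rw [hval] at this
    have h1 : Complex.normSq z.1 = 0 ∧ Complex.normSq z.2.1 = 0 := by
      constructor <;> nlinarith [Complex.normSq_nonneg z.1, Complex.normSq_nonneg z.2.1]
    exact ⟨Complex.normSq_eq_zero.mp h1.1, Complex.normSq_eq_zero.mp h1.2⟩
  · rintro ⟨h1, h2⟩ w _
    rw [fderiv_liftMomentMap_apply, h1, h2]
    simp
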